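/- arXiv:2106.12357 — 2 statements merged into one kernel-verified Lean document; each statement's English description precedes it below -/
import Mathlib

section
/- For k ≥ 4 and m ≥ 3, the graph Γ on Δ^k (Δ = {0,...,m-1}) in which two tuples are adjacent iff they differ in exactly 2 coordinates is not 2-geodesic transitive: the triples (u,v,w₁) and (u,v,w₂), where u = (0,0,0,0,0,...,0), v = (1,1,0,0,0,...,0), w₁ = (1,2,0,1,0,...,0), w₂ = (1,1,1,1,0,...,0), are both 2-geodesics starting with the same arc (u,v), but no automorphism fixing u and v maps w₁ to w₂. -/
/-- Two tuples differ in exactly two coordinates. -/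
def diffTwo {k m : ℕ} (u v : Fin k → Fin m) : Prop :=
  ∃ i j : Fin k, i ≠ j ∧ u i ≠ v i ∧ u j ≠ v j ∧
    ∀ l : Fin k, l ≠ i → l ≠ j → u l = v l

/-- The graph on `Δ^k` with adjacency "differ in exactly 2 coordinates". -/
def gridGraph (k m : ℕ) : SimpleGraph (Fin k → Fin m) where
  Adj u v := diffTwo u v
  symm := ⟨fun u v ⟨i, j, hij, hi, hj, h⟩ =>
    ⟨i, j, hij, hi.symm, hj.symm, fun l h1 h2 => (h l h1 h2).symm⟩⟩
  loopless := ⟨fun u ⟨i, _, _, hi, _, _⟩ => hi rfl⟩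

/-!
An automorphism fixing `u` and `v` and sending `w₁` to `w₂` maps the common neighbours of
`u, v, w₁` bijectively onto those of `u, v, w₂`, preserving adjacency. Two common neighbours of
`u, v, w₂` are adjacent, namely `(0,1,0,1,0,…)` and `(0,1,1,0,0,…)`. The common neighbours of
`u, v, w₁`, on the other hand, are independent: each is supported on two of the coordinates
`0, 1, 3` where `w₁` is nonzero, agrees with `w₁` at one of them (`j`) and differs from it at the
other (`l`), and the possible pairs `(j, l)` are `(0, 3)`, `(3, 1)`, `(1, 0)`. Two such vectors
with the same pair differ in one coordinate; with different pairs they differ in three.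
-/

open Finset

theorem SimpleGraph.not_exists_iso_of_isIndepSet {V : Type*} {G : SimpleGraph V} {u v w w' : V}
    (hw : G.IsIndepSet (G.commonNeighbors u v ∩ G.neighborSet w))
    (hw' : ¬ G.IsIndepSet (G.commonNeighbors u v ∩ G.neighborSet w')) :
    ¬ ∃ g : G ≃g G, g u = u ∧ g v = v ∧ g w = w' := by
  rintro ⟨g, hu, hv, hww⟩
  have pull : ∀ {x}, x ∈ G.commonNeighbors u v ∩ G.neighborSet w' →
      g.symm x ∈ G.commonNeighbors u v ∩ G.neighborSet w := by
    rintro x ⟨⟨hux, hvx⟩, hwx⟩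
    rw [← g.symm_apply_eq.2 hu.symm, ← g.symm_apply_eq.2 hv.symm, ← g.symm_apply_eq.2 hww.symm]
    exact ⟨⟨g.symm.map_adj_iff.2 hux, g.symm.map_adj_iff.2 hvx⟩, g.symm.map_adj_iff.2 hwx⟩
  exact hw' fun x hx y hy hxy hadj =>
    hw (pull hx) (pull hy) (g.symm.injective.ne hxy) (g.symm.map_adj_iff.2 hadj)

def SimpleGraph.IsTwoGeodesic {V : Type*} (G : SimpleGraph V) (u v w : V) : Prop :=
  G.Adj u v ∧ G.Adj v w ∧ u ≠ w ∧ ¬ G.Adj u w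

namespace gridGraph

variable {k m : ℕ} {a b : Fin k → Fin m} {p q r : Fin k}

theorem adj_iff_hammingDist : (gridGraph k m).Adj a b ↔ hammingDist a b = 2 := by
  rw [hammingDist, card_eq_two]
  constructor
  · rintro ⟨i, j, hij, hi, hj, h⟩
    refine ⟨i, j, hij, ?_⟩
    ext l
    simp only [mem_filter, mem_univ, true_and, mem_insert, mem_singleton]
    exact ⟨fun hl => by by_contra! hc; exact hl (h l hc.1 hc.2),
      by rintro (rfl | rfl) <;> assumption⟩
  · rintro ⟨i, j, hij, hs⟩
    have hmem : ∀ l, a l ≠ b l ↔ l = i ∨ l = j := fun l => by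
      simpa using congrArg (l ∈ ·) hs
    exact ⟨i, j, hij, (hmem i).2 (.inl rfl), (hmem j).2 (.inr rfl),
      fun l hi hj => by by_contra hl; exact ((hmem l).1 hl).elim hi hj⟩

theorem not_adj_of_ne_of_ne_of_ne (hpq : p ≠ q) (hpr : p ≠ r) (hqr : q ≠ r) (hp : a p ≠ b p)
    (hq : a q ≠ b q) (hr : a r ≠ b r) : ¬ (gridGraph k m).Adj a b := by
  rw [adj_iff_hammingDist, hammingDist]
  have hsub : ({p, q, r} : Finset (Fin k)) ⊆ ({i | a i ≠ b i} : Finset (Fin k)) := by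
    intro i
    simp only [mem_insert, mem_singleton, mem_filter, mem_univ, true_and]
    rintro (rfl | rfl | rfl) <;> assumption
  have := card_le_card hsub
  rw [card_insert_of_notMem (by simp [hpq, hpr]), card_pair hqr] at this
  omega

theorem eq_of_adj (h : (gridGraph k m).Adj a b) (hpq : p ≠ q) (hp : a p ≠ b p)
    (hq : a q ≠ b q) {l : Fin k} (hlp : l ≠ p) (hlq : l ≠ q) : a l = b l := by
  by_contra hl
  exact not_adj_of_ne_of_ne_of_ne hpq hlp.symm hlq.symm hp hq hl h

theorem not_adj_of_eq_of_ne {e : Fin k} (h : ∀ l, l ≠ e → a l = b l) :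
    ¬ (gridGraph k m).Adj a b := by
  rintro ⟨i, j, hij, hi, hj, -⟩
  by_contra
  exact hij ((not_imp_comm.1 (h i) hi).trans (not_imp_comm.1 (h j) hj).symm)

theorem isTwoGeodesic_of_ne_of_ne_of_ne {c : Fin k → Fin m} (hab : (gridGraph k m).Adj a b)
    (hbc : (gridGraph k m).Adj b c) (hpq : p ≠ q) (hpr : p ≠ r) (hqr : q ≠ r) (hp : a p ≠ c p)
    (hq : a q ≠ c q) (hr : a r ≠ c r) : (gridGraph k m).IsTwoGeodesic a b c :=
  ⟨hab, hbc, fun h => hp (congrFun h p), not_adj_of_ne_of_ne_of_ne hpq hpr hqr hp hq hr⟩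

theorem exists_ne_of_adj_const {z : Fin m} {x : Fin k → Fin m}
    (h : (gridGraph k m).Adj (fun _ => z) x) (e : Fin k) : ∃ b, b ≠ e ∧ x b ≠ z := by
  obtain ⟨i, j, hij, hi, hj, -⟩ := h
  by_cases hie : i = e
  · exact ⟨j, fun hje => hij (hie.trans hje.symm), Ne.symm hj⟩
  · exact ⟨i, hie, Ne.symm hi⟩

structure MatchesAt (z : Fin m) (w : Fin k → Fin m) (j l : Fin k) (x : Fin k → Fin m) : Prop where
  eq : x j = w j
  ne_const : x l ≠ z
  ne : x l ≠ w l
  eq_const : ∀ p, p ≠ j → p ≠ l → x p = z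

section MatchesAt

variable {z : Fin m} {w x y : Fin k → Fin m} {i j l : Fin k}

theorem MatchesAt.not_adj (hx : MatchesAt z w j l x) (hy : MatchesAt z w j l y) :
    ¬ (gridGraph k m).Adj x y :=
  not_adj_of_eq_of_ne (e := l) fun p hpl => by
    by_cases hpj : p = j
    · rw [hpj, hx.eq, hy.eq]
    · rw [hx.eq_const p hpj hpl, hy.eq_const p hpj hpl]

theorem MatchesAt.not_adj_of_rotate (hx : MatchesAt z w j l x) (hy : MatchesAt z w l i y)
    (hij : i ≠ j) (hil : i ≠ l) (hjl : j ≠ l) (hwj : w j ≠ z) : ¬ (gridGraph k m).Adj x y :=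
  not_adj_of_ne_of_ne_of_ne hij hil hjl
    (by rw [hx.eq_const i hij hil]; exact hy.ne_const.symm)
    (by rw [hx.eq, hy.eq_const j hjl hij.symm]; exact hwj)
    (by rw [hy.eq]; exact hx.ne)

end MatchesAt

section Configuration

variable {e₀ e₁ e₂ e₃ : Fin k} {z₀ z₁ c : Fin m} {v w x : Fin k → Fin m}

theorem eq_and_exists_of_adj_const_of_adj {e e' : Fin k} (hee' : e ≠ e') (hz : z₀ ≠ z₁)
    (hv : ∀ l, v l = if l = e ∨ l = e' then z₁ else z₀)
    (hux : (gridGraph k m).Adj (fun _ => z₀) x) (hvx : (gridGraph k m).Adj v x)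
    (he' : x e' = z₀) :
    x e = z₁ ∧ ∃ b, b ≠ e ∧ b ≠ e' ∧ x b ≠ z₀ ∧ ∀ l, l ≠ e → l ≠ b → x l = z₀ := by
  obtain ⟨b, hbe, hbx⟩ := exists_ne_of_adj_const hux e
  have hbe' : b ≠ e' := fun h => hbx (h ▸ he')
  have hxe : x e = z₁ := by
    by_contra hxe
    refine not_adj_of_ne_of_ne_of_ne hee' hbe.symm hbe'.symm ?_ ?_ ?_ hvx
    · simpa [hv] using Ne.symm hxe
    · simpa [hv, hee'.symm, he'] using hz.symm
    · simpa [hv, hbe, hbe'] using hbx.symm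
  refine ⟨hxe, b, hbe, hbe', hbx, fun l hle hlb => (eq_of_adj hux hbe.symm ?_ ?_ hle hlb).symm⟩
  · simpa [hxe] using hz
  · exact hbx.symm

theorem matchesAt_of_eq_const_snd (h01 : e₀ ≠ e₁) (h03 : e₀ ≠ e₃) (h13 : e₁ ≠ e₃) (hz : z₀ ≠ z₁)
    (hc₀ : c ≠ z₀) (hv : ∀ l, v l = if l = e₀ ∨ l = e₁ then z₁ else z₀)
    (hw : ∀ l, w l = if l = e₀ then z₁ else if l = e₁ then c else if l = e₃ then z₁ else z₀)
    (hux : (gridGraph k m).Adj (fun _ => z₀) x) (hvx : (gridGraph k m).Adj v x)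
    (hwx : (gridGraph k m).Adj w x) (hx₁ : x e₁ = z₀) : MatchesAt z₀ w e₀ e₃ x := by
  obtain ⟨hx₀, b, hb₀, hb₁, hbx, hsupp⟩ := eq_and_exists_of_adj_const_of_adj h01 hz hv hux hvx hx₁
  obtain rfl : e₃ = b := by
    by_contra hb₃
    refine not_adj_of_ne_of_ne_of_ne h13 hb₁.symm hb₃ ?_ ?_ ?_ hwx
    · simpa [hw, h01.symm, hx₁] using hc₀
    · simpa [hw, h03.symm, h13.symm, hsupp e₃ h03.symm hb₃] using hz.symm
    · simpa [hw, hb₀, hb₁, Ne.symm hb₃] using hbx.symm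
  refine ⟨by simpa [hw] using hx₀, hbx, fun hx₃ => not_adj_of_eq_of_ne (e := e₁) ?_ hwx, hsupp⟩
  intro l hl₁
  by_cases hl₀ : l = e₀
  · simp [hw, hl₀, hx₀]
  by_cases hl₃ : l = e₃
  · simp [hw, hl₃, h03.symm, h13.symm, hx₃]
  · simp [hw, hl₀, hl₁, hl₃, hsupp l hl₀ hl₃]

theorem matchesAt_of_eq_const_fst (h01 : e₀ ≠ e₁) (h03 : e₀ ≠ e₃) (h13 : e₁ ≠ e₃)
    (hz : z₀ ≠ z₁) (hc₁ : c ≠ z₁) (hv : ∀ l, v l = if l = e₀ ∨ l = e₁ then z₁ else z₀)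
    (hw : ∀ l, w l = if l = e₀ then z₁ else if l = e₁ then c else if l = e₃ then z₁ else z₀)
    (hux : (gridGraph k m).Adj (fun _ => z₀) x) (hvx : (gridGraph k m).Adj v x)
    (hwx : (gridGraph k m).Adj w x) (hx₀ : x e₀ = z₀) : MatchesAt z₀ w e₃ e₁ x := by
  obtain ⟨hx₁, b, hb₁, hb₀, hbx, hsupp⟩ :=
    eq_and_exists_of_adj_const_of_adj h01.symm hz (by simpa [or_comm] using hv) hux hvx hx₀
  obtain rfl : e₃ = b := by
    by_contra hb₃
    refine not_adj_of_ne_of_ne_of_ne h01 hb₀.symm hb₁.symm ?_ ?_ ?_ hwx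
    · simpa [hw, hx₀] using hz.symm
    · simpa [hw, h01.symm, hx₁] using hc₁
    · simpa [hw, hb₀, hb₁, Ne.symm hb₃] using hbx.symm
  have hx₃ : x e₃ = z₁ := by
    by_contra hx₃
    refine not_adj_of_ne_of_ne_of_ne h01 h03 h13 ?_ ?_ ?_ hwx
    · simpa [hw, hx₀] using hz.symm
    · simpa [hw, h01.symm, hx₁] using hc₁
    · simpa [hw, h03.symm, h13.symm] using Ne.symm hx₃
  exact ⟨by simp [hw, h03.symm, h13.symm, hx₃], by simpa [hx₁] using hz.symm,
    by simpa [hw, h01.symm, hx₁] using hc₁.symm, fun l hl₃ hl₁ => hsupp l hl₁ hl₃⟩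

theorem matchesAt_of_ne_const (h01 : e₀ ≠ e₁) (h03 : e₀ ≠ e₃) (h13 : e₁ ≠ e₃) (hz : z₀ ≠ z₁)
    (hv : ∀ l, v l = if l = e₀ ∨ l = e₁ then z₁ else z₀)
    (hw : ∀ l, w l = if l = e₀ then z₁ else if l = e₁ then c else if l = e₃ then z₁ else z₀)
    (hux : (gridGraph k m).Adj (fun _ => z₀) x) (hvx : (gridGraph k m).Adj v x)
    (hwx : (gridGraph k m).Adj w x) (hx₀ : x e₀ ≠ z₀) (hx₁ : x e₁ ≠ z₀) :
    MatchesAt z₀ w e₁ e₀ x := by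
  have hsupp : ∀ l, l ≠ e₁ → l ≠ e₀ → x l = z₀ := fun l hl₁ hl₀ =>
    (eq_of_adj hux h01 hx₀.symm hx₁.symm hl₀ hl₁).symm
  have hx₀' : x e₀ ≠ z₁ := fun hx₀' => not_adj_of_eq_of_ne (e := e₁) (fun l hl₁ => by
    by_cases hl₀ : l = e₀
    · simp [hv, hl₀, hx₀']
    · simp [hv, hl₀, hl₁, hsupp l hl₁ hl₀]) hvx
  have hx₁' : x e₁ = c := by
    by_contra hx₁'
    refine not_adj_of_ne_of_ne_of_ne h01 h03 h13 ?_ ?_ ?_ hwx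
    · simpa [hw] using Ne.symm hx₀'
    · simpa [hw, h01.symm] using Ne.symm hx₁'
    · simpa [hw, h03.symm, h13.symm, hsupp e₃ h13.symm h03.symm] using hz.symm
  exact ⟨by simpa [hw, h01.symm] using hx₁', hx₀, by simpa [hw] using hx₀', hsupp⟩

theorem adj_const_of_eq_ite (h01 : e₀ ≠ e₁) (hz : z₀ ≠ z₁)
    (hv : ∀ l, v l = if l = e₀ ∨ l = e₁ then z₁ else z₀) : (gridGraph k m).Adj (fun _ => z₀) v :=
  ⟨e₀, e₁, h01, by simpa [hv] using hz, by simpa [hv] using hz,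
    fun l h₀ h₁ => by simp [hv, h₀, h₁]⟩

theorem isTwoGeodesic_of_overlap (h01 : e₀ ≠ e₁) (h03 : e₀ ≠ e₃) (h13 : e₁ ≠ e₃)
    (hz : z₀ ≠ z₁) (hc₀ : c ≠ z₀) (hc₁ : c ≠ z₁)
    (hv : ∀ l, v l = if l = e₀ ∨ l = e₁ then z₁ else z₀)
    (hw : ∀ l, w l = if l = e₀ then z₁ else if l = e₁ then c else if l = e₃ then z₁ else z₀) :
    (gridGraph k m).IsTwoGeodesic (fun _ => z₀) v w := by
  refine isTwoGeodesic_of_ne_of_ne_of_ne (adj_const_of_eq_ite h01 hz hv)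
    ⟨e₁, e₃, h13, ?_, ?_, fun l h₁ h₃ => ?_⟩ h01 h03 h13 ?_ ?_ ?_
  · simpa [hv, hw, h01.symm] using hc₁.symm
  · simpa [hv, hw, h03.symm, h13.symm] using hz
  · by_cases h₀ : l = e₀ <;> simp [hv, hw, h₀, h₁, h₃]
  · simpa [hw] using hz
  · simpa [hw, h01.symm] using hc₀.symm
  · simpa [hw, h03.symm, h13.symm] using hz

theorem isTwoGeodesic_of_disjoint (h01 : e₀ ≠ e₁) (h02 : e₀ ≠ e₂) (h03 : e₀ ≠ e₃)
    (h12 : e₁ ≠ e₂) (h13 : e₁ ≠ e₃) (h23 : e₂ ≠ e₃) (hz : z₀ ≠ z₁)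
    (hv : ∀ l, v l = if l = e₀ ∨ l = e₁ then z₁ else z₀)
    (hw : ∀ l, w l = if l = e₀ ∨ l = e₁ ∨ l = e₂ ∨ l = e₃ then z₁ else z₀) :
    (gridGraph k m).IsTwoGeodesic (fun _ => z₀) v w := by
  refine isTwoGeodesic_of_ne_of_ne_of_ne (adj_const_of_eq_ite h01 hz hv)
    ⟨e₂, e₃, h23, ?_, ?_, fun l h₂ h₃ => ?_⟩ h01 h02 h12 ?_ ?_ ?_
  · simpa [hv, hw, h02.symm, h12.symm] using hz
  · simpa [hv, hw, h03.symm, h13.symm] using hz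
  · simp [hv, hw, h₂, h₃]
  all_goals simpa [hw] using hz

theorem isIndepSet_commonNeighbors_inter_neighborSet (h01 : e₀ ≠ e₁) (h03 : e₀ ≠ e₃)
    (h13 : e₁ ≠ e₃) (hz : z₀ ≠ z₁) (hc₀ : c ≠ z₀) (hc₁ : c ≠ z₁)
    (hv : ∀ l, v l = if l = e₀ ∨ l = e₁ then z₁ else z₀)
    (hw : ∀ l, w l = if l = e₀ then z₁ else if l = e₁ then c else if l = e₃ then z₁ else z₀) :
    (gridGraph k m).IsIndepSet
      ((gridGraph k m).commonNeighbors (fun _ => z₀) v ∩ (gridGraph k m).neighborSet w) := by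
  have hcases : ∀ x ∈ (gridGraph k m).commonNeighbors (fun _ => z₀) v ∩
      (gridGraph k m).neighborSet w,
      MatchesAt z₀ w e₀ e₃ x ∨ MatchesAt z₀ w e₃ e₁ x ∨ MatchesAt z₀ w e₁ e₀ x := by
    rintro x ⟨⟨hux, hvx⟩, hwx⟩
    by_cases hx₁ : x e₁ = z₀
    · exact .inl (matchesAt_of_eq_const_snd h01 h03 h13 hz hc₀ hv hw hux hvx hwx hx₁)
    by_cases hx₀ : x e₀ = z₀
    · exact .inr (.inl (matchesAt_of_eq_const_fst h01 h03 h13 hz hc₁ hv hw hux hvx hwx hx₀))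
    · exact .inr (.inr (matchesAt_of_ne_const h01 h03 h13 hz hv hw hux hvx hwx hx₀ hx₁))
  have rot₁ {x y} (hx : MatchesAt z₀ w e₀ e₃ x) (hy : MatchesAt z₀ w e₃ e₁ y) :=
    hx.not_adj_of_rotate hy h01.symm h13 h03 (by simpa [hw] using hz.symm)
  have rot₂ {x y} (hx : MatchesAt z₀ w e₃ e₁ x) (hy : MatchesAt z₀ w e₁ e₀ y) :=
    hx.not_adj_of_rotate hy h03 h01 h13.symm (by simpa [hw, h03.symm, h13.symm] using hz.symm)
  have rot₃ {x y} (hx : MatchesAt z₀ w e₁ e₀ x) (hy : MatchesAt z₀ w e₀ e₃ y) :=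
    hx.not_adj_of_rotate hy h13.symm h03.symm h01.symm (by simpa [hw, h01.symm] using hc₀)
  intro x hx y hy _ hxy
  rcases hcases x hx with hx | hx | hx <;> rcases hcases y hy with hy | hy | hy <;>
    first
    | exact hx.not_adj hy hxy
    | exact rot₁ hx hy hxy | exact rot₂ hx hy hxy | exact rot₃ hx hy hxy
    | exact rot₁ hy hx hxy.symm | exact rot₂ hy hx hxy.symm | exact rot₃ hy hx hxy.symm

theorem not_isIndepSet_commonNeighbors_inter_neighborSet (h01 : e₀ ≠ e₁) (h02 : e₀ ≠ e₂)
    (h03 : e₀ ≠ e₃) (h12 : e₁ ≠ e₂) (h13 : e₁ ≠ e₃) (h23 : e₂ ≠ e₃) (hz : z₀ ≠ z₁)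
    (hv : ∀ l, v l = if l = e₀ ∨ l = e₁ then z₁ else z₀)
    (hw : ∀ l, w l = if l = e₀ ∨ l = e₁ ∨ l = e₂ ∨ l = e₃ then z₁ else z₀) :
    ¬ (gridGraph k m).IsIndepSet
      ((gridGraph k m).commonNeighbors (fun _ => z₀) v ∩ (gridGraph k m).neighborSet w) := by
  let x : Fin k → Fin m := fun l => if l = e₁ ∨ l = e₃ then z₁ else z₀
  let y : Fin k → Fin m := fun l => if l = e₁ ∨ l = e₂ then z₁ else z₀
  have hux : (gridGraph k m).Adj (fun _ => z₀) x :=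
    ⟨e₁, e₃, h13, by simp [x, hz], by simp [x, hz], fun l h₁ h₃ => by simp [x, h₁, h₃]⟩
  have hvx : (gridGraph k m).Adj v x :=
    ⟨e₀, e₃, h03, by simp [x, hv, h01, h03, hz.symm], by simp [x, hv, h03.symm, h13.symm, hz],
      fun l h₀ h₃ => by simp [x, hv, h₀, h₃]⟩
  have hwx : (gridGraph k m).Adj w x :=
    ⟨e₀, e₂, h02, by simp [x, hw, h01, h03, hz.symm], by simp [x, hw, h12.symm, h23, hz.symm],
      fun l h₀ h₂ => by simp [x, hw, h₀, h₂]⟩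
  have huy : (gridGraph k m).Adj (fun _ => z₀) y :=
    ⟨e₁, e₂, h12, by simp [y, hz], by simp [y, hz], fun l h₁ h₂ => by simp [y, h₁, h₂]⟩
  have hvy : (gridGraph k m).Adj v y :=
    ⟨e₀, e₂, h02, by simp [y, hv, h01, h02, hz.symm], by simp [y, hv, h02.symm, h12.symm, hz],
      fun l h₀ h₂ => by simp [y, hv, h₀, h₂]⟩
  have hwy : (gridGraph k m).Adj w y :=
    ⟨e₀, e₃, h03, by simp [y, hw, h01, h02, hz.symm], by simp [y, hw, h13.symm, h23.symm, hz.symm],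
      fun l h₀ h₃ => by simp [y, hw, h₀, h₃]⟩
  have hxy : (gridGraph k m).Adj x y :=
    ⟨e₂, e₃, h23, by simp [x, y, h12.symm, h23, hz], by simp [x, y, h13.symm, h23.symm, hz.symm],
      fun l h₂ h₃ => by simp [x, y, h₂, h₃]⟩
  exact fun h => h ⟨⟨hux, hvx⟩, hwx⟩ ⟨⟨huy, hvy⟩, hwy⟩ hxy.ne hxy

end Configuration

end gridGraph

/-- For `k ≥ 4`, `m ≥ 3`, the graph on `Δ^k` (adjacency: differ in exactly 2
coordinates) is not 2-geodesic transitive: `(u,v,w₁)` and `(u,v,w₂)` are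
2-geodesics starting with the same arc, but no automorphism fixing `u` and `v`
maps `w₁` to `w₂`. -/
theorem stmt_7 (k m : ℕ) (hk : 4 ≤ k) (hm : 3 ≤ m) :
    let z0 : Fin m := ⟨0, by omega⟩
    let z1 : Fin m := ⟨1, by omega⟩
    let z2 : Fin m := ⟨2, by omega⟩
    let u : Fin k → Fin m := fun _ => z0
    let v : Fin k → Fin m := fun i => if i.val = 0 ∨ i.val = 1 then z1 else z0
    let w₁ : Fin k → Fin m := fun i =>
      if i.val = 0 then z1 else if i.val = 1 then z2 else
        if i.val = 3 then z1 else z0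
    let w₂ : Fin k → Fin m := fun i => if i.val ≤ 3 then z1 else z0
    ((gridGraph k m).Adj u v ∧ (gridGraph k m).Adj v w₁ ∧
      u ≠ w₁ ∧ ¬ (gridGraph k m).Adj u w₁) ∧
    ((gridGraph k m).Adj v w₂ ∧ u ≠ w₂ ∧ ¬ (gridGraph k m).Adj u w₂) ∧
    ¬ ∃ g : gridGraph k m ≃g gridGraph k m,
        g u = u ∧ g v = v ∧ g w₁ = w₂ := by
  intro z0 z1 z2 u v w₁ w₂
  let e₀ : Fin k := ⟨0, by omega⟩
  let e₁ : Fin k := ⟨1, by omega⟩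
  let e₂ : Fin k := ⟨2, by omega⟩
  let e₃ : Fin k := ⟨3, by omega⟩
  obtain ⟨h01, h02, h03, h12, h13, h23⟩ :
      e₀ ≠ e₁ ∧ e₀ ≠ e₂ ∧ e₀ ≠ e₃ ∧ e₁ ≠ e₂ ∧ e₁ ≠ e₃ ∧ e₂ ≠ e₃ := by simp [e₀, e₁, e₂, e₃]
  obtain ⟨hz, hc₀, hc₁⟩ : z0 ≠ z1 ∧ z2 ≠ z0 ∧ z2 ≠ z1 := by simp [z0, z1, z2]
  have hv : ∀ l, v l = if l = e₀ ∨ l = e₁ then z1 else z0 := fun l => by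
    simp [v, e₀, e₁, Fin.ext_iff]
  have hw₁ : ∀ l, w₁ l = if l = e₀ then z1 else if l = e₁ then z2 else if l = e₃ then z1 else z0 :=
    fun l => by simp [w₁, e₀, e₁, e₃, Fin.ext_iff]
  have hw₂ : ∀ l, w₂ l = if l = e₀ ∨ l = e₁ ∨ l = e₂ ∨ l = e₃ then z1 else z0 := fun l => by
    simp only [w₂, e₀, e₁, e₂, e₃, Fin.ext_iff]
    split_ifs <;> omega
  exact ⟨gridGraph.isTwoGeodesic_of_overlap h01 h03 h13 hz hc₀ hc₁ hv hw₁,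
    (gridGraph.isTwoGeodesic_of_disjoint h01 h02 h03 h12 h13 h23 hz hv hw₂).2,
    SimpleGraph.not_exists_iso_of_isIndepSet
      (gridGraph.isIndepSet_commonNeighbors_inter_neighborSet h01 h03 h13 hz hc₀ hc₁ hv hw₁)
      (gridGraph.not_isIndepSet_commonNeighbors_inter_neighborSet h01 h02 h03 h12 h13 h23 hz hv
        hw₂)⟩
end

section
/- Let Γ be a connected graph such that Aut(Γ) acts transitively on 4-arcs. If Γ is a 4-arc transitive graph of valency k ≥ 3 that is the standard double cover of a non-bipartite graph, then Γ has girth at least 8. -/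
/-- `p 0, p 1, …, p s` is an `s`-arc of `Γ`. -/
def IsNArc {V : Type*} (Γ : SimpleGraph V) (s : ℕ) (p : ℕ → V) : Prop :=
  (∀ i < s, Γ.Adj (p i) (p (i + 1))) ∧
  ∀ i, 1 ≤ i → i < s → p (i - 1) ≠ p (i + 1)

/-- The standard double cover of a graph. -/
def doubleCover {V : Type*} (Sg : SimpleGraph V) : SimpleGraph (V × Bool) where
  Adj a b := Sg.Adj a.1 b.1 ∧ a.2 ≠ b.2
  symm := ⟨fun a b h => ⟨h.1.symm, h.2.symm⟩⟩
  loopless := ⟨fun a h => h.2 rfl⟩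

open SimpleGraph

section Aux

/-- A function describing a potential 4-arc. -/
def arcFun {α : Type*} (a b c d e : α) : ℕ → α
  | 0 => a
  | 1 => b
  | 2 => c
  | 3 => d
  | _ => e

@[simp] lemma arcFun_zero {α : Type*} (a b c d e : α) : arcFun a b c d e 0 = a := rfl
@[simp] lemma arcFun_one {α : Type*} (a b c d e : α) : arcFun a b c d e 1 = b := rfl
@[simp] lemma arcFun_two {α : Type*} (a b c d e : α) : arcFun a b c d e 2 = c := rfl
@[simp] lemma arcFun_three {α : Type*} (a b c d e : α) : arcFun a b c d e 3 = d := rfl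
@[simp] lemma arcFun_four {α : Type*} (a b c d e : α) : arcFun a b c d e 4 = e := rfl

lemma myGetVertMap {α β : Type*} {G : SimpleGraph α} {G' : SimpleGraph β} (f : G →g G') :
    ∀ {u v : α} (w : G.Walk u v) (i : ℕ), (w.map f).getVert i = f (w.getVert i) := by
  intro u v w
  induction w with
  | nil =>
    intro i
    rw [Walk.getVert_of_length_le _ (by simp), Walk.getVert_of_length_le _ (by simp)]
  | cons h q ih =>
    intro i
    cases i with
    | zero => simp
    | succ n =>
      rw [Walk.map_cons, Walk.getVert_cons_succ, Walk.getVert_cons_succ]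
      exact ih n

lemma mySupportEq {α : Type*} {G : SimpleGraph α} :
    ∀ {u v : α} (w : G.Walk u v), w.support = (List.range (w.length + 1)).map w.getVert := by
  intro u v w
  induction w with
  | nil => simp [Walk.support_nil, List.range_succ]
  | cons h q ih =>
    rw [Walk.support_cons, ih]
    conv_rhs => rw [show (Walk.cons h q).length + 1 = (q.length + 1) + 1 from rfl,
      List.range_succ_eq_map, List.map_cons, List.map_map]
    rw [Walk.getVert_zero]
    exact congrArg (List.cons _)
      (List.map_congr_left (fun t _ => (Walk.getVert_cons_succ q h).symm))

lemma myCycleNe {α : Type*} {G : SimpleGraph α} {a : α} {w : G.Walk a a} (hc : w.IsCycle)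
    {i j : ℕ} (h1 : 1 ≤ i) (hij : i < j) (hj : j ≤ w.length) :
    w.getVert i ≠ w.getVert j := by
  intro he
  have hnd := hc.support_nodup
  rw [mySupportEq, List.range_succ_eq_map, List.map_cons, List.tail_cons, List.map_map] at hnd
  have hmem1 : i - 1 ∈ List.range w.length := by rw [List.mem_range]; omega
  have hmem2 : j - 1 ∈ List.range w.length := by rw [List.mem_range]; omega
  have := (List.nodup_map_iff_inj_on List.nodup_range).mp hnd (i - 1) hmem1 (j - 1) hmem2 ?_
  · omega
  · show w.getVert (i - 1 + 1) = w.getVert (j - 1 + 1)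
    rw [Nat.sub_add_cancel h1, Nat.sub_add_cancel (by omega)]
    exact he

variable {V : Type*} {Sg : SimpleGraph V} {k : ℕ}

lemma dc_parity {a b : V × Bool} (w : (doubleCover Sg).Walk a b) :
    a.2 = b.2 ↔ Even w.length := by
  induction w with
  | nil => simp
  | @cons x y z h q ih =>
    have h2 : x.2 ≠ y.2 := h.2
    rw [Walk.length_cons, Nat.even_add_one, ← ih]
    cases hx : x.2 <;> cases hy : y.2 <;> cases hz : z.2 <;> simp_all

/-- The deck transformation of the double cover. -/
def sigmaHom (Sg : SimpleGraph V) : doubleCover Sg →g doubleCover Sg where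
  toFun a := (a.1, !a.2)
  map_rel' := fun {a b} h => ⟨h.1, fun hc => h.2 (Bool.not_inj hc)⟩

lemma sigmaHom_injective : Function.Injective (sigmaHom Sg) := by
  rintro ⟨a1, a2⟩ ⟨b1, b2⟩ h
  obtain ⟨h1, h2⟩ := Prod.mk.injEq .. ▸ h
  exact Prod.ext h1 (Bool.not_inj h2)

lemma dc_not_acyclic (hconn : (doubleCover Sg).Connected) : ¬ (doubleCover Sg).IsAcyclic := by
  classical
  intro hac
  obtain ⟨⟨u, _⟩⟩ := hconn.nonempty
  obtain ⟨w⟩ := hconn.preconnected (u, false) (u, true)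
  set P := w.toPath with hP
  have huniq := isAcyclic_iff_path_unique.mp hac
    (P.map (sigmaHom Sg) sigmaHom_injective) P.reverse
  have hval := congrArg Subtype.val huniq
  set L := (P.val : (doubleCover Sg).Walk _ _).length with hL
  have hgv : ∀ i, sigmaHom Sg (P.val.getVert i) = P.val.getVert (L - i) := by
    intro i
    have h1 := congrArg (fun w' => Walk.getVert w' i) hval
    calc sigmaHom Sg (P.val.getVert i)
        = (Walk.map (sigmaHom Sg) P.val).getVert i := (myGetVertMap _ _ i).symm
      _ = (P.val.reverse).getVert i := h1
      _ = P.val.getVert (L - i) := Walk.getVert_reverse _ _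
  rcases Nat.even_or_odd L with he | ho
  · obtain ⟨t, ht⟩ := he
    have h := hgv t
    rw [show L - t = t by omega] at h
    have h2 := congrArg Prod.snd h
    have h3 : (!(P.val.getVert t).2) = (P.val.getVert t).2 := h2
    simp at h3
  · obtain ⟨t, ht⟩ := ho
    have hlt : t < L := by omega
    have hadj := P.val.adj_getVert_succ hlt
    have h := hgv t
    rw [show L - t = t + 1 by omega] at h
    rw [← h] at hadj
    exact Sg.irrefl hadj.1

lemma exists_open_arc (hk : 3 ≤ k) (hconn : (doubleCover Sg).Connected)
    (hreg : ∀ v : V × Bool, ((doubleCover Sg).neighborSet v).ncard = k) :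
    ∃ q : ℕ → V × Bool, IsNArc (doubleCover Sg) 4 q ∧ q 0 ≠ q 4 := by
  have pick : ∀ v a b : V × Bool, ∃ w, (doubleCover Sg).Adj v w ∧ w ≠ a ∧ w ≠ b := by
    intro v a b
    by_contra hcon
    push_neg at hcon
    have hsub : (doubleCover Sg).neighborSet v ⊆ {a, b} := by
      intro w hw
      rcases eq_or_ne w a with h | h
      · exact Or.inl h
      · exact Or.inr (hcon w hw h)
    have hfin : ({a, b} : Set (V × Bool)).Finite := (Set.finite_singleton b).insert a
    have hle := Set.ncard_le_ncard hsub hfin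
    have h2 : ({a, b} : Set (V × Bool)).ncard ≤ 2 := by
      refine le_trans (Set.ncard_insert_le a {b}) ?_
      simp [Set.ncard_singleton]
    rw [hreg v] at hle
    omega
  obtain ⟨v0⟩ := hconn.nonempty
  obtain ⟨v1, h1, -, -⟩ := pick v0 v0 v0
  obtain ⟨v2, h2, h2a, -⟩ := pick v1 v0 v0
  obtain ⟨v3, h3, h3a, -⟩ := pick v2 v1 v1
  obtain ⟨v4, h4, h4a, h4b⟩ := pick v3 v2 v0
  refine ⟨arcFun v0 v1 v2 v3 v4, ⟨?_, ?_⟩, ?_⟩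
  · intro i hi
    interval_cases i
    · exact h1
    · exact h2
    · exact h3
    · exact h4
  · intro i hi1 hi4
    interval_cases i
    · show v0 ≠ v2; exact h2a.symm
    · show v1 ≠ v3; exact h3a.symm
    · show v2 ≠ v4; exact h4a.symm
  · show v0 ≠ v4; exact h4b.symm

end Aux

section Main

variable {V : Type*} {Sg : SimpleGraph V} {k : ℕ}

lemma no_closed_arc
    (harc : ∀ p q : ℕ → V × Bool,
      IsNArc (doubleCover Sg) 4 p → IsNArc (doubleCover Sg) 4 q →
      ∃ g : doubleCover Sg ≃g doubleCover Sg, ∀ i ≤ 4, g (p i) = q i)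
    (hopen : ∃ q : ℕ → V × Bool, IsNArc (doubleCover Sg) 4 q ∧ q 0 ≠ q 4) :
    ¬ ∃ p : ℕ → V × Bool, IsNArc (doubleCover Sg) 4 p ∧ p 0 = p 4 := by
  rintro ⟨p, hp, hpc⟩
  obtain ⟨q, hq, hne⟩ := hopen
  obtain ⟨g, hg⟩ := harc q p hq hp
  apply hne
  apply g.injective
  rw [hg 0 (by norm_num), hg 4 le_rfl, hpc]

lemma arc_close
    (harc : ∀ p q : ℕ → V × Bool,
      IsNArc (doubleCover Sg) 4 p → IsNArc (doubleCover Sg) 4 q →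
      ∃ g : doubleCover Sg ≃g doubleCover Sg, ∀ i ≤ 4, g (p i) = q i)
    (hp6 : ∃ (p : ℕ → V × Bool) (x : V × Bool), IsNArc (doubleCover Sg) 4 p ∧
      (doubleCover Sg).Adj (p 4) x ∧ (doubleCover Sg).Adj x (p 0)) :
    ∀ q : ℕ → V × Bool, IsNArc (doubleCover Sg) 4 q →
      ∃ y, (doubleCover Sg).Adj (q 4) y ∧ (doubleCover Sg).Adj y (q 0) := by
  obtain ⟨p, x, hp, hx1, hx2⟩ := hp6
  intro q hq
  obtain ⟨g, hg⟩ := harc q p hq hp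
  refine ⟨g.symm x, ?_, ?_⟩
  · have h : (doubleCover Sg).Adj (g (q 4)) (g (g.symm x)) := by
      rw [hg 4 le_rfl, g.apply_symm_apply]
      exact hx1
    exact g.map_adj_iff.mp h
  · have h : (doubleCover Sg).Adj (g (g.symm x)) (g (q 0)) := by
      rw [hg 0 (by norm_num), g.apply_symm_apply]
      exact hx2
    exact g.map_adj_iff.mp h

lemma walk_to_close
    (H6 : ∀ q : ℕ → V × Bool, IsNArc (doubleCover Sg) 4 q →
      ∃ y, (doubleCover Sg).Adj (q 4) y ∧ (doubleCover Sg).Adj y (q 0)) :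
    ∀ {a b : V × Bool} (w : (doubleCover Sg).Walk a b),
      (Even w.length → a = b ∨ ∃ z, (doubleCover Sg).Adj a z ∧ (doubleCover Sg).Adj z b) ∧
      (Odd w.length → (doubleCover Sg).Adj a b ∨
        ∃ z z', (doubleCover Sg).Adj a z ∧ (doubleCover Sg).Adj z z' ∧ (doubleCover Sg).Adj z' b) := by
  intro a b w
  induction w with
  | nil =>
    refine ⟨fun _ => Or.inl rfl, fun h => absurd h ?_⟩
    simp [Nat.odd_iff]
  | @cons x c d h q ih =>
    constructor
    · intro hev
      have hodd : Odd q.length := by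
        rw [Walk.length_cons, Nat.even_add_one] at hev
        exact Nat.not_even_iff_odd.mp hev
      rcases ih.2 hodd with hcd | ⟨z1, z2, hy1, h12, h2d⟩
      · exact Or.inr ⟨c, h, hcd⟩
      · by_cases e1 : x = z1
        · subst e1; exact Or.inr ⟨z2, h12, h2d⟩
        by_cases e2 : c = z2
        · subst e2; exact Or.inr ⟨c, h, h2d⟩
        by_cases e3 : z1 = d
        · exact Or.inr ⟨c, h, e3 ▸ hy1⟩
        have harcq : IsNArc (doubleCover Sg) 4 (arcFun x c z1 z2 d) := by
          constructor
          · intro i hi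
            interval_cases i
            · exact h
            · exact hy1
            · exact h12
            · exact h2d
          · intro i hi1 hi4
            interval_cases i
            · show x ≠ z1; exact e1
            · show c ≠ z2; exact e2
            · show z1 ≠ d; exact e3
        obtain ⟨y, hy4, hy0⟩ := H6 (arcFun x c z1 z2 d) harcq
        exact Or.inr ⟨y, hy0.symm, hy4.symm⟩
    · intro hoddw
      have hev : Even q.length := by
        rw [Walk.length_cons] at hoddw
        rcases hoddw with ⟨t, ht⟩
        exact ⟨t, by omega⟩
      rcases ih.1 hev with rfl | ⟨z1, h1, h2⟩
      · exact Or.inl h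
      · exact Or.inr ⟨c, z1, h, h1, h2⟩

lemma friendship_prop (hconn : (doubleCover Sg).Connected)
    (H6 : ∀ q : ℕ → V × Bool, IsNArc (doubleCover Sg) 4 q →
      ∃ y, (doubleCover Sg).Adj (q 4) y ∧ (doubleCover Sg).Adj y (q 0))
    (hnc : ¬ ∃ p : ℕ → V × Bool, IsNArc (doubleCover Sg) 4 p ∧ p 0 = p 4) :
    ∀ u v : V, u ≠ v → ∃! w, Sg.Adj u w ∧ Sg.Adj v w := by
  intro u v huv
  obtain ⟨w⟩ := hconn.preconnected (u, false) (v, false)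
  have hev : Even w.length := (dc_parity w).mp rfl
  rcases (walk_to_close H6 w).1 hev with heq | ⟨z, h1, h2⟩
  · exact absurd (congrArg Prod.fst heq) huv
  · refine ⟨z.1, ⟨h1.1, h2.1.symm⟩, ?_⟩
    intro y ⟨hyu, hyv⟩
    by_contra hne
    apply hnc
    refine ⟨arcFun (u, false) (y, true) (v, false) (z.1, true) (u, false), ⟨?_, ?_⟩, rfl⟩
    · intro i hi
      interval_cases i
      · exact ⟨hyu, by simp⟩
      · exact ⟨hyv.symm, by simp⟩
      · exact ⟨h2.1.symm, by simp⟩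
      · exact ⟨h1.1.symm, by simp⟩
    · intro i hi1 hi4
      interval_cases i
      · show ((u : V), false) ≠ (v, false)
        exact fun hh => huv (congrArg Prod.fst hh)
      · show ((y : V), true) ≠ (z.1, true)
        exact fun hh => hne (congrArg Prod.fst hh)
      · show ((v : V), false) ≠ (u, false)
        exact fun hh => huv (congrArg Prod.fst hh).symm

lemma sg_nbr_eq (v : V) :
    (doubleCover Sg).neighborSet (v, false) = (fun w => (w, true)) '' Sg.neighborSet v := by
  ext ⟨w, b⟩
  constructor
  · rintro ⟨hadj, hne⟩
    have hb : b = true := by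
      revert hne
      cases b <;> simp
    subst hb
    exact ⟨w, hadj, rfl⟩
  · rintro ⟨w', hw', heq⟩
    cases heq
    exact ⟨hw', by simp⟩

lemma sg_ncard (hreg : ∀ v : V × Bool, ((doubleCover Sg).neighborSet v).ncard = k) (v : V) :
    (Sg.neighborSet v).ncard = k := by
  have h := hreg (v, false)
  rw [sg_nbr_eq, Set.ncard_image_of_injective _ (fun a b hab => congrArg Prod.fst hab)] at h
  exact h

lemma sg_nbr_finite (hk : 3 ≤ k)
    (hreg : ∀ v : V × Bool, ((doubleCover Sg).neighborSet v).ncard = k) (v : V) :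
    (Sg.neighborSet v).Finite :=
  Set.finite_of_ncard_ne_zero (by rw [sg_ncard hreg]; omega)

lemma v_finite (hk : 3 ≤ k) (hconn : (doubleCover Sg).Connected)
    (hreg : ∀ v : V × Bool, ((doubleCover Sg).neighborSet v).ncard = k)
    (hf : ∀ u v : V, u ≠ v → ∃! w, Sg.Adj u w ∧ Sg.Adj v w) : Finite V := by
  obtain ⟨⟨u0, _⟩⟩ := hconn.nonempty
  have hfin : (Set.univ : Set V).Finite := by
    apply Set.Finite.subset (Set.Finite.union (Set.finite_singleton u0)
      (Set.Finite.biUnion (sg_nbr_finite hk hreg u0) (fun w _ => sg_nbr_finite hk hreg w)))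
    intro v _
    rcases eq_or_ne v u0 with rfl | hne
    · exact Or.inl rfl
    · obtain ⟨w, ⟨hw1, hw2⟩, -⟩ := hf u0 v hne.symm
      exact Or.inr (Set.mem_biUnion hw1 hw2.symm)
  exact Set.finite_univ_iff.mp hfin

lemma matrix_contr [Fintype V] [Nonempty V] (hk : 3 ≤ k)
    (hdeg : ∀ v : V, (Sg.neighborSet v).ncard = k)
    (hf : ∀ u v : V, u ≠ v → ∃! w, Sg.Adj u w ∧ Sg.Adj v w) : False := by
  classical
  obtain ⟨p, hp, hdvd⟩ := Nat.exists_prime_and_dvd (show k - 1 ≠ 1 by omega)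
  haveI : Fact p.Prime := ⟨hp⟩
  have hdeg' : ∀ v : V, (Sg.degree v : ZMod p) = 1 := by
    intro v
    have h1 : Sg.degree v = k := by
      rw [← hdeg v, ← card_neighborFinset_eq_degree, ← Set.ncard_coe_finset]
      congr 1
      rw [neighborFinset_def]
      exact Set.coe_toFinset _
    have h0 : ((k - 1 : ℕ) : ZMod p) = 0 := (ZMod.natCast_eq_zero_iff _ _).mpr hdvd
    rw [Nat.cast_sub (by omega)] at h0
    rw [h1]
    have := sub_eq_zero.mp h0
    simpa using this
  set J : Matrix V V (ZMod p) := Matrix.of (fun _ _ => (1 : ZMod p)) with hJ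
  have hAJ : Sg.adjMatrix (ZMod p) * J = J := by
    ext v w
    rw [adjMatrix_mul_apply]
    simp only [hJ, Matrix.of_apply, Finset.sum_const, nsmul_eq_mul, mul_one,
      card_neighborFinset_eq_degree]
    exact hdeg' v
  have hJA : J * Sg.adjMatrix (ZMod p) = J := by
    ext v w
    rw [mul_adjMatrix_apply]
    simp only [hJ, Matrix.of_apply, Finset.sum_const, nsmul_eq_mul, mul_one,
      card_neighborFinset_eq_degree]
    exact hdeg' w
  have hAA : Sg.adjMatrix (ZMod p) * Sg.adjMatrix (ZMod p) = J := by
    ext v w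
    rcases eq_or_ne v w with rfl | hvw
    · rw [adjMatrix_mul_self_apply_self]
      simpa [hJ] using hdeg' v
    · rw [adjMatrix_mul_apply]
      have hsum : ∑ u ∈ Sg.neighborFinset v, Sg.adjMatrix (ZMod p) u w
          = (((Sg.neighborFinset v).filter (fun u => Sg.Adj u w)).card : ZMod p) := by
        rw [← Finset.sum_boole]
        apply Finset.sum_congr rfl
        intro u _
        simp [adjMatrix_apply]
      obtain ⟨z, hz, hzu⟩ := hf v w hvw
      have hfilter : (Sg.neighborFinset v).filter (fun u => Sg.Adj u w) = {z} := by
        ext y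
        simp only [Finset.mem_filter, mem_neighborFinset, Finset.mem_singleton]
        constructor
        · rintro ⟨ha, hb⟩
          exact hzu y ⟨ha, hb.symm⟩
        · rintro rfl
          exact ⟨hz.1, hz.2.symm⟩
      rw [hsum, hfilter]
      simp [hJ]
  have hJJ : J * J = J := by
    calc J * J = (Sg.adjMatrix (ZMod p) * Sg.adjMatrix (ZMod p)) * J := by rw [hAA]
    _ = Sg.adjMatrix (ZMod p) * (Sg.adjMatrix (ZMod p) * J) := Matrix.mul_assoc _ _ _
    _ = J := by rw [hAJ, hAJ]
  have hcard : ((Fintype.card V : ℕ) : ZMod p) = 1 := by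
    obtain ⟨u0⟩ := ‹Nonempty V›
    have h := congrFun (congrFun hJJ u0) u0
    rw [Matrix.mul_apply] at h
    simpa [hJ, Finset.card_univ] using h
  have hJpow : ∀ m, 1 ≤ m → J ^ m = J := by
    intro m hm
    induction m with
    | zero => omega
    | succ n ih =>
      rcases Nat.eq_or_lt_of_le hm with h | h
      · rw [← h, pow_one]
      · rw [pow_succ, ih (by omega), hJJ]
  have hAp : Sg.adjMatrix (ZMod p) ^ p = J := by
    rcases hp.eq_two_or_odd' with rfl | hodd
    · rw [pow_two, hAA]
    · obtain ⟨m, hm⟩ := hodd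
      have hm1 : 1 ≤ m := by have := hp.two_le; omega
      calc Sg.adjMatrix (ZMod p) ^ p
          = Sg.adjMatrix (ZMod p) ^ (2 * m + 1) := congrArg (Sg.adjMatrix (ZMod p) ^ ·) hm
        _ = (Sg.adjMatrix (ZMod p) ^ 2) ^ m * Sg.adjMatrix (ZMod p) := by
            rw [pow_succ, pow_mul]
        _ = J ^ m * Sg.adjMatrix (ZMod p) := by rw [pow_two, hAA]
        _ = J * Sg.adjMatrix (ZMod p) := by rw [hJpow m hm1]
        _ = J := hJA
  have htr := ZMod.trace_pow_card (Sg.adjMatrix (ZMod p))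
  rw [hAp, trace_adjMatrix, zero_pow hp.ne_zero] at htr
  have htrJ : Matrix.trace J = ((Fintype.card V : ℕ) : ZMod p) := by
    simp [Matrix.trace, Matrix.diag, hJ, Finset.card_univ]
  rw [htrJ, hcard] at htr
  exact one_ne_zero htr

end Main

/-- A connected 4-arc transitive graph of valency `k ≥ 3` which is the
standard double cover of a non-bipartite graph has girth at least 8. -/
theorem stmt_16 {V : Type*} (Sg : SimpleGraph V) (k : ℕ) (hk : 3 ≤ k)
    (hnb : ¬ Sg.Colorable 2)
    (hconn : (doubleCover Sg).Connected)
    (hreg : ∀ v : V × Bool, ((doubleCover Sg).neighborSet v).ncard = k)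
    (harc : ∀ p q : ℕ → V × Bool,
      IsNArc (doubleCover Sg) 4 p → IsNArc (doubleCover Sg) 4 q →
      ∃ g : doubleCover Sg ≃g doubleCover Sg, ∀ i ≤ 4, g (p i) = q i) :
    8 ≤ (doubleCover Sg).girth := by
  by_cases hac : (doubleCover Sg).IsAcyclic
  · exact absurd hac (dc_not_acyclic hconn)
  by_contra hlt
  push_neg at hlt
  obtain ⟨a, w, hwc, hglen⟩ := (SimpleGraph.exists_girth_eq_length).mpr hac
  have h3 : 3 ≤ w.length := hwc.three_le_length
  have heven : Even w.length := (dc_parity w).mp rfl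
  have hlen8 : w.length < 8 := hglen ▸ hlt
  have hlen : w.length = 4 ∨ w.length = 6 := by
    rcases heven with ⟨t, ht⟩
    omega
  have hopen := exists_open_arc hk hconn hreg
  have hnc : ¬ ∃ p : ℕ → V × Bool, IsNArc (doubleCover Sg) 4 p ∧ p 0 = p 4 :=
    no_closed_arc harc hopen
  rcases hlen with h4 | h6
  · apply hnc
    refine ⟨fun i => w.getVert i, ⟨?_, ?_⟩, ?_⟩
    · intro i hi
      exact w.adj_getVert_succ (by omega)
    · intro i hi1 hi4
      have key : w.getVert 0 = w.getVert 4 := by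
        rw [show (4 : ℕ) = w.length from h4.symm, Walk.getVert_zero, Walk.getVert_length]
      interval_cases i
      · show w.getVert 0 ≠ w.getVert 2
        rw [key]
        exact (myCycleNe hwc (by norm_num) (by norm_num) (by omega)).symm
      · show w.getVert 1 ≠ w.getVert 3
        exact myCycleNe hwc (by norm_num) (by norm_num) (by omega)
      · show w.getVert 2 ≠ w.getVert 4
        exact myCycleNe hwc (by norm_num) (by norm_num) (by omega)
    · show w.getVert 0 = w.getVert 4
      rw [show (4 : ℕ) = w.length from h4.symm, Walk.getVert_zero, Walk.getVert_length]
  · have key : w.getVert 6 = w.getVert 0 := by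
      rw [show (6 : ℕ) = w.length from h6.symm, Walk.getVert_zero, Walk.getVert_length]
    have hp : IsNArc (doubleCover Sg) 4 (fun i => w.getVert i) := by
      constructor
      · intro i hi
        exact w.adj_getVert_succ (by omega)
      · intro i hi1 hi4
        interval_cases i
        · show w.getVert 0 ≠ w.getVert 2
          rw [← key]
          exact (myCycleNe hwc (by norm_num) (by norm_num) (by omega)).symm
        · show w.getVert 1 ≠ w.getVert 3
          exact myCycleNe hwc (by norm_num) (by norm_num) (by omega)
        · show w.getVert 2 ≠ w.getVert 4
          exact myCycleNe hwc (by norm_num) (by norm_num) (by omega)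
    have hx1 : (doubleCover Sg).Adj (w.getVert 4) (w.getVert 5) :=
      w.adj_getVert_succ (by omega)
    have hx2 : (doubleCover Sg).Adj (w.getVert 5) (w.getVert 0) := by
      have h := w.adj_getVert_succ (show 5 < w.length by omega)
      rw [show (5 : ℕ) + 1 = 6 from rfl, key] at h
      exact h
    have H6 := arc_close harc ⟨_, _, hp, hx1, hx2⟩
    have hfr := friendship_prop hconn H6 hnc
    haveI : Finite V := v_finite hk hconn hreg hfr
    haveI : Fintype V := Fintype.ofFinite V
    haveI : Nonempty V := ⟨hconn.nonempty.some.1⟩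
    exact matrix_contr hk (sg_ncard hreg) hfr
end
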